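/- Let p be an odd prime and n ≥ 1, and let G = ℤ/p^nℤ. Then Q(G) = S(G) ∩ R(G); that is, every two members of S(G) ∩ R(G) mutually normalize each other. -/

import Mathlib

open Equiv Pointwise

/-- A subgroup `N ≤ Perm X` is regular if for all `x y : X` there is exactly one
element of `N` sending `x` to `y`. -/
def IsRegularSubgroup {X : Type*} (N : Subgroup (Equiv.Perm X)) : Prop :=
  ∀ x y : X, ∃! η : N, (η : Equiv.Perm X) x = y

/-- The left regular representation of an additive group `A`, `λ(g)(x) = g + x`,
as a monoid homomorphism `Multiplicative A →* Perm A`. -/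
def addLamHom (A : Type*) [AddGroup A] : Multiplicative A →* Equiv.Perm A where
  toFun a := Equiv.addLeft (Multiplicative.toAdd a)
  map_one' := by ext x; simp
  map_mul' a b := by ext x; simp [Equiv.Perm.mul_apply, add_assoc]

/-- The image `λ(A)` of the left regular representation. -/
def lamA (A : Type*) [AddGroup A] : Subgroup (Equiv.Perm A) := (addLamHom A).range

/-- The holomorph `Hol(A) = Norm_B(λ(A))` of an additive group `A`. -/
def HolA (A : Type*) [AddGroup A] : Subgroup (Equiv.Perm A) := Subgroup.normalizer (lamA A : Set (Equiv.Perm A))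

/-- `S(G)` for `G = ℤ/pⁿℤ`: regular subgroups isomorphic to `G` inside `Hol(G)`. -/
def SA (p n : ℕ) : Set (Subgroup (Equiv.Perm (ZMod (p ^ n)))) :=
  {N | IsRegularSubgroup N ∧ Nonempty (N ≃* Multiplicative (ZMod (p ^ n))) ∧
    N ≤ HolA (ZMod (p ^ n))}

/-- `R(G)` for `G = ℤ/pⁿℤ`: regular subgroups isomorphic to `G` normalized by `λ(G)`. -/
def RA (p n : ℕ) : Set (Subgroup (Equiv.Perm (ZMod (p ^ n)))) :=
  {N | IsRegularSubgroup N ∧ Nonempty (N ≃* Multiplicative (ZMod (p ^ n))) ∧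
    lamA (ZMod (p ^ n)) ≤ Subgroup.normalizer (N : Set (Equiv.Perm (ZMod (p ^ n))))}

/-- `Q(G)` for `G = ℤ/pⁿℤ`. -/
def QA (p n : ℕ) : Set (Subgroup (Equiv.Perm (ZMod (p ^ n)))) :=
  {M ∈ SA p n ∩ RA p n | ∀ N ∈ SA p n ∩ RA p n, N ≤ Subgroup.normalizer (M : Set (Equiv.Perm (ZMod (p ^ n))))}

/-! Every element of `Hol(ℤ/m)` is affine, `x ↦ a + u x`. If `N` is abelian and normalized by
the translations, the translation by `u - 1` lies in `N` and commutes with `(a, u)`, which forces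
`(u - 1)² = 0`; in `ℤ/m` any two square-zero elements have product zero. For `ν = (a, u) ∈ N` and
`μ = (b, v) ∈ M` one has `ν μ ν⁻¹ = λ((u - 1) b) λ((1 - v) a) μ`. The second translation is the
commutator of `μ` with `λ(-a)`, and the first commutes with every `(b', v') ∈ M` because
`(u - 1)(v' - 1) = 0`, so it lies in `M`, a transitive abelian group being self-centralizing. -/

theorem addLeft_mem_lamA {A : Type*} [AddGroup A] (c : A) : Equiv.addLeft c ∈ lamA A :=
  ⟨Multiplicative.ofAdd c, rfl⟩

/-- Conjugating the translation by `c` with `η ∈ Hol(A)` gives the translation by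
`η c - η 0`, which makes `x ↦ -η 0 + η x` additive. -/
theorem exists_addMonoidHom_of_mem_HolA {A : Type*} [AddGroup A] {η : Perm A}
    (hη : η ∈ HolA A) : ∃ f : A →+ A, ∀ x, η x = η 0 + f x := by
  have hη_add : ∀ c y, η (c + y) = η c + -η 0 + η y := by
    intro c y
    obtain ⟨d, hd⟩ := (Subgroup.mem_normalizer_iff.mp hη _).mp (addLeft_mem_lamA c)
    have hd_apply (z : A) : Multiplicative.toAdd d + z = η (c + η.symm z) :=
      DFunLike.congr_fun hd z
    have h0 := hd_apply (η 0)
    have hy := hd_apply (η y)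
    simp only [Equiv.symm_apply_apply, add_zero] at h0 hy
    rw [← hy, ← h0]
    simp only [add_assoc, add_neg_cancel_left]
  refine ⟨{ toFun := fun x => -η 0 + η x
            map_zero' := neg_add_cancel _
            map_add' := fun c y => by simp only [hη_add, add_assoc] }, fun x => ?_⟩
  simp

theorem ZMod.addMonoidHom_apply_eq_mul {m : ℕ} (f : ZMod m →+ ZMod m) (x : ZMod m) :
    f x = x * f 1 := by
  obtain ⟨k, rfl⟩ := ZMod.intCast_surjective x
  rw [← zsmul_one, map_zsmul, smul_mul_assoc, one_mul]

theorem exists_affine_of_mem_HolA {m : ℕ} {η : Perm (ZMod m)} (hη : η ∈ HolA (ZMod m)) :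
    ∃ a u : ZMod m, ∀ x, η x = a + u * x := by
  obtain ⟨f, hf⟩ := exists_addMonoidHom_of_mem_HolA hη
  exact ⟨η 0, f 1, fun x => by rw [hf, ZMod.addMonoidHom_apply_eq_mul f x, mul_comm]⟩

/-- In `ℤ/m`, if `m ∣ x²` and `m ∣ y²` then `m² ∣ (xy)²`, so `m ∣ xy`. -/
theorem ZMod.mul_eq_zero_of_mul_self_eq_zero {m : ℕ} {x y : ZMod m} (hx : x * x = 0)
    (hy : y * y = 0) : x * y = 0 := by
  obtain ⟨a, rfl⟩ := ZMod.intCast_surjective x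
  obtain ⟨b, rfl⟩ := ZMod.intCast_surjective y
  simp only [← Int.cast_mul, ZMod.intCast_zmod_eq_zero_iff_dvd] at hx hy ⊢
  rw [← Int.pow_dvd_pow_iff two_ne_zero]
  simpa only [sq, mul_mul_mul_comm] using mul_dvd_mul hx hy

theorem le_centralizer_of_mulEquiv {G C : Type*} [Group G] [CommGroup C] {H : Subgroup G}
    (e : H ≃* C) : H ≤ Subgroup.centralizer H :=
  Subgroup.le_centralizer_iff_isMulCommutative.mpr
    ⟨⟨fun x y => e.injective (by rw [map_mul, map_mul, mul_comm])⟩⟩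

theorem IsRegularSubgroup.isPretransitive {X : Type*} {P : Subgroup (Perm X)}
    (hP : IsRegularSubgroup P) : MulAction.IsPretransitive P X :=
  ⟨fun x y => (hP x y).exists⟩

theorem centralizer_le_of_isPretransitive {X : Type*} {P : Subgroup (Perm X)}
    [MulAction.IsPretransitive P X] (hP : P ≤ Subgroup.centralizer P) :
    Subgroup.centralizer P ≤ P := by
  intro η hη
  rcases isEmpty_or_nonempty X with hX | ⟨⟨x₀⟩⟩
  · exact Subsingleton.elim (1 : Perm X) η ▸ one_mem P
  obtain ⟨⟨μ₀, hμ₀P⟩, hμ₀⟩ := MulAction.exists_smul_eq P x₀ (η x₀)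
  suffices η = μ₀ from this ▸ hμ₀P
  ext x
  obtain ⟨⟨μ, hμP⟩, rfl⟩ := MulAction.exists_smul_eq P x₀ x
  have hημ := Subgroup.mem_centralizer_iff.mp hη μ hμP
  have hμ₀μ := Subgroup.mem_centralizer_iff.mp (hP hμP) μ₀ hμ₀P
  rw [Subgroup.smul_def, Perm.smul_def] at hμ₀ ⊢
  calc η (μ x₀) = μ (η x₀) := (DFunLike.congr_fun hημ x₀).symm
    _ = μ (μ₀ x₀) := by rw [hμ₀]
    _ = μ₀ (μ x₀) := (DFunLike.congr_fun hμ₀μ x₀).symm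

theorem le_normalizer_of_conj_mem {G : Type*} [Group G] {N M : Subgroup G}
    (h : ∀ ν ∈ N, ∀ μ ∈ M, ν * μ * ν⁻¹ ∈ M) : N ≤ Subgroup.normalizer (M : Set G) := by
  intro ν hν
  refine Subgroup.mem_normalizer_iff.mpr fun μ => ⟨h ν hν μ, fun hμ => ?_⟩
  simpa [mul_assoc] using h ν⁻¹ (inv_mem hν) _ hμ

section AffineCommutators

variable {R : Type*} {P : Subgroup (Perm R)}

/-- The commutator of an affine map `x ↦ b + v x` in `P` with the translation by `c`
is the translation by `(v - 1) c`. -/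
theorem addLeft_sub_one_mul_mem [Ring R] (hP : lamA R ≤ Subgroup.normalizer (P : Set (Perm R)))
    {μ : Perm R} (hμ : μ ∈ P) {b v : R} (hμ_eq : ∀ x, μ x = b + v * x) (c : R) :
    Equiv.addLeft ((v - 1) * c) ∈ P := by
  have hconj : Equiv.addLeft c * μ⁻¹ * (Equiv.addLeft c)⁻¹ ∈ P :=
    (Subgroup.mem_normalizer_iff.mp (hP (addLeft_mem_lamA c)) _).mp (inv_mem hμ)
  have hcomm : Equiv.addLeft ((v - 1) * c) = μ * Equiv.addLeft c * μ⁻¹ * (Equiv.addLeft c)⁻¹ := by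
    rw [eq_mul_inv_iff_mul_eq, eq_mul_inv_iff_mul_eq]
    ext x
    simp only [Perm.mul_apply, Equiv.coe_addLeft, hμ_eq]
    noncomm_ring
  rw [hcomm]
  simpa only [mul_assoc] using mul_mem hμ hconj

theorem sub_one_mul_self_eq_zero [CommRing R] (hP : lamA R ≤ Subgroup.normalizer (P : Set (Perm R)))
    (hP_comm : P ≤ Subgroup.centralizer P) {ν : Perm R} (hν : ν ∈ P) {a u : R}
    (hν_eq : ∀ x, ν x = a + u * x) : (u - 1) * (u - 1) = 0 := by
  have h := Subgroup.mem_centralizer_iff.mp (hP_comm hν) _ (addLeft_sub_one_mul_mem hP hν hν_eq 1)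
  have h0 := DFunLike.congr_fun h 0
  simp only [Perm.mul_apply, Equiv.coe_addLeft, hν_eq] at h0
  linear_combination -h0

end AffineCommutators

theorem conj_mem_of_mem_HolA {m : ℕ} {N M : Subgroup (Perm (ZMod m))} [MulAction.IsPretransitive M (ZMod m)]
    (hN_hol : N ≤ HolA (ZMod m)) (hM_hol : M ≤ HolA (ZMod m))
    (hN_norm : lamA (ZMod m) ≤ Subgroup.normalizer (N : Set (Perm (ZMod m))))
    (hM_norm : lamA (ZMod m) ≤ Subgroup.normalizer (M : Set (Perm (ZMod m))))
    (hN_comm : N ≤ Subgroup.centralizer N) (hM_comm : M ≤ Subgroup.centralizer M)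
    {ν μ : Perm (ZMod m)} (hν : ν ∈ N) (hμ : μ ∈ M) : ν * μ * ν⁻¹ ∈ M := by
  obtain ⟨a, u, hν_eq⟩ := exists_affine_of_mem_HolA (hN_hol hν)
  obtain ⟨b, v, hμ_eq⟩ := exists_affine_of_mem_HolA (hM_hol hμ)
  have hu := sub_one_mul_self_eq_zero hN_norm hN_comm hν hν_eq
  have h_first : Equiv.addLeft ((u - 1) * b) ∈ M := by
    refine centralizer_le_of_isPretransitive hM_comm
      (Subgroup.mem_centralizer_iff.mpr fun μ' hμ' => ?_)
    obtain ⟨b', v', hμ'_eq⟩ := exists_affine_of_mem_HolA (hM_hol hμ')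
    have huv := ZMod.mul_eq_zero_of_mul_self_eq_zero hu
      (sub_one_mul_self_eq_zero hM_norm hM_comm hμ' hμ'_eq)
    ext x
    simp only [Perm.mul_apply, Equiv.coe_addLeft, hμ'_eq]
    linear_combination b * huv
  have h_second : Equiv.addLeft ((1 - v) * a) ∈ M := by
    have h := addLeft_sub_one_mul_mem hM_norm hμ hμ_eq (-a)
    rwa [show (v - 1) * -a = (1 - v) * a by ring] at h
  have h_conj : ν * μ * ν⁻¹ = Equiv.addLeft ((u - 1) * b) * Equiv.addLeft ((1 - v) * a) * μ := by
    rw [mul_inv_eq_iff_eq_mul]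
    ext x
    simp only [Perm.mul_apply, Equiv.coe_addLeft, hν_eq, hμ_eq]
    ring
  rw [h_conj]
  exact mul_mem (mul_mem h_first h_second) hμ

theorem QA_eq_SA_inter_RA_general (p n : ℕ) :
    QA p n = SA p n ∩ RA p n := by
  refine Set.Subset.antisymm (fun M hM => hM.1) fun M hM => ⟨hM, fun N hN => ?_⟩
  obtain ⟨⟨-, ⟨eN⟩, hN_hol⟩, -, -, hN_norm⟩ := hN
  obtain ⟨⟨hM_reg, ⟨eM⟩, hM_hol⟩, -, -, hM_norm⟩ := hM
  have := hM_reg.isPretransitive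
  exact le_normalizer_of_conj_mem fun ν hν μ hμ =>
    conj_mem_of_mem_HolA hN_hol hM_hol hN_norm hM_norm (le_centralizer_of_mulEquiv eN)
      (le_centralizer_of_mulEquiv eM) hν hμ

/-- For `p` an odd prime and `G = ℤ/pⁿℤ`, `Q(G) = S(G) ∩ R(G)`:
all members of `S(G) ∩ R(G)` mutually normalize each other. -/
theorem QA_eq_SA_inter_RA (p n : ℕ) (hp : p.Prime) (hodd : Odd p) (hn : 1 ≤ n) :
    QA p n = SA p n ∩ RA p n :=
  QA_eq_SA_inter_RA_general p n
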